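/- Let (Y, 𝒴) be a measurable space, r : Y → ℝ a measurable reward with 0 ≤ r(y) ≤ 1 for all y, and let 0 < ε ≤ 3/4. For probability measures π and π_k on Y, the following on-policy improvement lower bound holds: J(π) − J(π_k) ≥ L_{π_k}(π) − 2·((1 − σ_{π_k,ε})/σ_{π_k,ε})·TV(π, π_k). -/

import Mathlib

/-!
`σ_{π_k,ε} ≤ 1` because a `[0,1]`-valued reward has variance at most `1/4` (Popoviciu) and
`ε ≤ 3/4`, and `J(π) − J(π_k) ≤ TV(π, π_k)` because, with densities `p, q` with respect to
`π + π_k`, `r (p − q) ≤ (p − q)⁺` pointwise and `∫ (p − q)⁺ = π(A) − π_k(A)` for `A = {q ≤ p}`.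
Writing `D = J(π) − J(π_k)`, the right-hand side of the bound is
`D + ((1 − σ)/σ) (D − 2 TV) ≤ D`.
-/

open MeasureTheory

/-- Expected reward `J(m) = ∫ r dm`. -/
noncomputable def J {Y : Type*} [MeasurableSpace Y] (r : Y → ℝ) (m : Measure Y) : ℝ :=
  ∫ y, r y ∂m

/-- Variance `σ_m² = ∫ (r − μ_m)² dm` with `μ_m = J(m)`. -/
noncomputable def rvar {Y : Type*} [MeasurableSpace Y] (r : Y → ℝ) (m : Measure Y) : ℝ :=
  ∫ y, (r y - J r m) ^ 2 ∂m

/-- Regularized standard deviation `σ_{m,ε} = sqrt(σ_m² + ε)`. -/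
noncomputable def sigmaEps {Y : Type*} [MeasurableSpace Y] (r : Y → ℝ) (m : Measure Y)
    (ε : ℝ) : ℝ :=
  Real.sqrt (rvar r m + ε)

/-- Off-policy advantage objective `L_α(π) = (J(π) − μ_α)/σ_{α,ε}`. -/
noncomputable def Ladv {Y : Type*} [MeasurableSpace Y] (r : Y → ℝ) (α π : Measure Y)
    (ε : ℝ) : ℝ :=
  (J r π - J r α) / sigmaEps r α ε

/-- Total variation distance `TV(m₁,m₂) = sup_{A measurable} |m₁(A) − m₂(A)|`. -/
noncomputable def tvDist {Y : Type*} [MeasurableSpace Y] (m₁ m₂ : Measure Y) : ℝ :=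
  ⨆ A : {s : Set Y // MeasurableSet s}, |(m₁ A.1).toReal - (m₂ A.1).toReal|

open ProbabilityTheory Set

section TotalVariation

variable {Y : Type*} [MeasurableSpace Y]

lemma bddAbove_range_abs_measureReal_sub (μ ν : Measure Y) [IsFiniteMeasure μ]
    [IsFiniteMeasure ν] :
    BddAbove (range fun A : {s : Set Y // MeasurableSet s} => |μ.real A.1 - ν.real A.1|) := by
  refine ⟨μ.real univ + ν.real univ, ?_⟩
  rintro _ ⟨A, rfl⟩
  have hμ : μ.real A.1 ≤ μ.real univ := measureReal_mono (subset_univ _)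
  have hν : ν.real A.1 ≤ ν.real univ := measureReal_mono (subset_univ _)
  rw [abs_sub_le_iff]
  constructor <;> linarith [measureReal_nonneg (μ := μ) (s := A.1),
    measureReal_nonneg (μ := ν) (s := A.1)]

lemma abs_measureReal_sub_le_tvDist (μ ν : Measure Y) [IsFiniteMeasure μ] [IsFiniteMeasure ν]
    {A : Set Y} (hA : MeasurableSet A) : |μ.real A - ν.real A| ≤ tvDist μ ν :=
  le_ciSup (bddAbove_range_abs_measureReal_sub μ ν) ⟨A, hA⟩

lemma tvDist_nonneg (μ ν : Measure Y) : 0 ≤ tvDist μ ν :=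
  Real.iSup_nonneg fun _ => abs_nonneg _

lemma exists_measurableSet_integral_sub_integral_le (μ ν : Measure Y) [IsFiniteMeasure μ]
    [IsFiniteMeasure ν] {f : Y → ℝ} (hf : Measurable f) (hf01 : ∀ y, f y ∈ Icc 0 1) :
    ∃ A, MeasurableSet A ∧ ∫ y, f y ∂μ - ∫ y, f y ∂ν ≤ μ.real A - ν.real A := by
  set ρ := μ + ν
  have hμ : μ ≪ ρ := Measure.AbsolutelyContinuous.rfl.add_right ν
  have hν : ν ≪ ρ := Measure.AbsolutelyContinuous.rfl.add_right' μ
  set p : Y → ℝ := fun y => (μ.rnDeriv ρ y).toReal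
  set q : Y → ℝ := fun y => (ν.rnDeriv ρ y).toReal
  have hp : Integrable p ρ := Measure.integrable_toReal_rnDeriv
  have hq : Integrable q ρ := Measure.integrable_toReal_rnDeriv
  have hf_int : ∀ m : Measure Y, [IsFiniteMeasure m] → Integrable f m := fun m _ =>
    .of_bound hf.aestronglyMeasurable 1 <| ae_of_all _ fun y => by
      rw [Real.norm_of_nonneg (hf01 y).1]; exact (hf01 y).2
  have hpf : Integrable (fun y => p y * f y) ρ :=
    (integrable_toReal_rnDeriv_mul_iff hμ).mpr (hf_int μ)
  have hqf : Integrable (fun y => q y * f y) ρ :=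
    (integrable_toReal_rnDeriv_mul_iff hν).mpr (hf_int ν)
  set A := {y | q y ≤ p y}
  have hA : MeasurableSet A :=
    measurableSet_le (Measure.measurable_rnDeriv ν ρ).ennreal_toReal
      (Measure.measurable_rnDeriv μ ρ).ennreal_toReal
  have h_pointwise : ∀ y, p y * f y - q y * f y ≤ A.indicator (fun y => p y - q y) y := by
    intro y
    rw [← sub_mul]
    by_cases hy : y ∈ A
    · rw [indicator_of_mem hy]
      exact mul_le_of_le_one_right (sub_nonneg.mpr hy) (hf01 y).2
    · rw [indicator_of_notMem hy]
      exact mul_nonpos_of_nonpos_of_nonneg (sub_nonpos.mpr (not_le.mp hy).le)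
        (hf01 y).1
  refine ⟨A, hA, ?_⟩
  calc ∫ y, f y ∂μ - ∫ y, f y ∂ν
      = ∫ y, p y * f y - q y * f y ∂ρ := by
        rw [integral_sub hpf hqf, integral_toReal_rnDeriv_mul hμ,
          integral_toReal_rnDeriv_mul hν]
    _ ≤ ∫ y, A.indicator (fun y => p y - q y) y ∂ρ :=
        integral_mono (hpf.sub hqf) ((hp.sub hq).indicator hA) h_pointwise
    _ = μ.real A - ν.real A := by
        rw [integral_indicator hA, integral_sub hp.restrict hq.restrict,
          Measure.setIntegral_toReal_rnDeriv hμ, Measure.setIntegral_toReal_rnDeriv hν]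

lemma integral_sub_integral_le_tvDist (μ ν : Measure Y) [IsFiniteMeasure μ] [IsFiniteMeasure ν]
    {f : Y → ℝ} (hf : Measurable f) (hf01 : ∀ y, f y ∈ Icc 0 1) :
    ∫ y, f y ∂μ - ∫ y, f y ∂ν ≤ tvDist μ ν := by
  obtain ⟨A, hA, hle⟩ := exists_measurableSet_integral_sub_integral_le μ ν hf hf01
  exact hle.trans ((le_abs_self _).trans (abs_measureReal_sub_le_tvDist μ ν hA))

end TotalVariation

section RegularizedStd

variable {Y : Type*} [MeasurableSpace Y] {r : Y → ℝ} {m : Measure Y} {ε : ℝ}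

lemma rvar_le_sq_of_bounded [IsProbabilityMeasure m] {a b : ℝ} (hr : ∀ᵐ y ∂m, r y ∈ Icc a b)
    (hm : AEMeasurable r m) : rvar r m ≤ ((b - a) / 2) ^ 2 := by
  rw [rvar, J, ← variance_eq_integral hm]
  exact variance_le_sq_of_bounded hr hm

lemma sigmaEps_pos (hε : 0 < ε) : 0 < sigmaEps r m ε :=
  Real.sqrt_pos.mpr (add_pos_of_nonneg_of_pos (integral_nonneg fun _ => sq_nonneg _) hε)

lemma sigmaEps_le_one [IsProbabilityMeasure m] (hr : ∀ᵐ y ∂m, r y ∈ Icc 0 1)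
    (hm : AEMeasurable r m) (hε : ε ≤ 3 / 4) : sigmaEps r m ε ≤ 1 :=
  Real.sqrt_le_one.mpr (by linarith [rvar_le_sq_of_bounded hr hm])

end RegularizedStd

lemma div_sub_two_mul_one_sub_div_mul_le {D t σ : ℝ} (hσ : 0 < σ) (hσ1 : σ ≤ 1) (hDt : D ≤ t)
    (ht : 0 ≤ t) : D / σ - 2 * ((1 - σ) / σ) * t ≤ D := by
  have hcoeff : 0 ≤ (1 - σ) / σ := div_nonneg (sub_nonneg.mpr hσ1) hσ.le
  calc D / σ - 2 * ((1 - σ) / σ) * t = D + (1 - σ) / σ * (D - 2 * t) := by field_simp; ring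
    _ ≤ D := add_le_of_nonpos_right (mul_nonpos_of_nonneg_of_nonpos hcoeff (by linarith))

/-- On-policy GRPO policy-improvement lower bound. -/
theorem onpolicy_improvement {Y : Type*} [MeasurableSpace Y]
    (r : Y → ℝ) (hr_meas : Measurable r) (hr : ∀ y, 0 ≤ r y ∧ r y ≤ 1)
    (ε : ℝ) (hε : 0 < ε) (hε' : ε ≤ 3 / 4)
    (π πk : Measure Y)
    [IsProbabilityMeasure π] [IsProbabilityMeasure πk] :
    J r π - J r πk ≥
      Ladv r πk π ε
        - 2 * ((1 - sigmaEps r πk ε) / sigmaEps r πk ε) * tvDist π πk :=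
  div_sub_two_mul_one_sub_div_mul_le (sigmaEps_pos hε)
    (sigmaEps_le_one (ae_of_all _ hr) hr_meas.aemeasurable hε')
    (integral_sub_integral_le_tvDist π πk hr_meas hr) (tvDist_nonneg π πk)
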